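/- For n ≥ 2, if x is a sub-word of length f_{2n} of a word in A_{n+2}, then the number of occurrences of the letter b in x satisfies f_{2n−2} − 1 ≤ |x|_b ≤ f_{2n−2} + 1. -/
import Mathlib


/-- The two-letter alphabet. -/
inductive Letter : Type
  | a : Letter
  | b : Letter
deriving DecidableEq

/-- A word is a finite sequence of letters. -/
abbrev Word := List Letter

/-- Concatenation set `UV = {uv : u ∈ U, v ∈ V}`. -/
def concatSet (U V : Set Word) : Set Word := {w | ∃ u ∈ U, ∃ v ∈ V, w = u ++ v}

mutual
  /-- The sets `A_n` of inflated words (indexed so that `Aset 1 = {a}`). -/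
  def Aset : ℕ → Set Word
    | 0 => ∅
    | 1 => {[Letter.a]}
    | n + 2 => concatSet (Bset (n + 1)) (concatSet (Aset (n + 1)) (Aset (n + 1)))
  /-- The sets `B_n` of inflated words (indexed so that `Bset 1 = {b}`). -/
  def Bset : ℕ → Set Word
    | 0 => ∅
    | 1 => {[Letter.b]}
    | n + 2 => concatSet (Aset (n + 1)) (Bset (n + 1)) ∪ concatSet (Bset (n + 1)) (Aset (n + 1))
end

/-- The sub-word `w[a,b] = w_a w_{a+1} … w_b` (1-indexed). -/
def wordSlice (w : Word) (i j : ℕ) : Word := (w.drop (i - 1)).take (j - i + 1)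

/-- `W[a,b] = {w[a,b] : w ∈ W}`. -/
def setSlice (W : Set Word) (i j : ℕ) : Set Word := {x | ∃ w ∈ W, x = wordSlice w i j}

/-- `x` is a sub-word (contiguous factor) of `w`. -/
def IsFactor (x w : Word) : Prop := ∃ u v : Word, w = u ++ x ++ v

/-- `F(S, m)`: the set of all sub-words of length `m` of words in `S`. -/
def FactorSet (S : Set Word) (m : ℕ) : Set Word :=
  {x | x.length = m ∧ ∃ w ∈ S, IsFactor x w}

/-- `F(A, m) = ⋃_{n ≥ 1} F(A_n, m)`. -/
def FA (m : ℕ) : Set Word := ⋃ n ∈ {n : ℕ | 1 ≤ n}, FactorSet (Aset n) m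

/-- `F(B, m) = ⋃_{n ≥ 1} F(B_n, m)`. -/
def FB (m : ℕ) : Set Word := ⋃ n ∈ {n : ℕ | 1 ≤ n}, FactorSet (Bset n) m

/-- The golden mean `τ = (1 + √5)/2`. -/
noncomputable def tau : ℝ := (1 + Real.sqrt 5) / 2


noncomputable def tc : ℝ := (Real.sqrt 5 - 1)/2
lemma ht2 : tc^2 = 1 - tc := by
  have h5 : Real.sqrt 5 ^ 2 = 5 := Real.sq_sqrt (by norm_num)
  unfold tc; nlinarith [h5]
lemma htlb : (61:ℝ)/100 < tc := by
  have : (2.22:ℝ) < Real.sqrt 5 := by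
    nlinarith [Real.sq_sqrt (show (0:ℝ) ≤ 5 by norm_num), Real.sqrt_nonneg 5]
  unfold tc; nlinarith
lemma htub : tc < (62:ℝ)/100 := by
  have : Real.sqrt 5 < 2.24 := by
    nlinarith [Real.sq_sqrt (show (0:ℝ) ≤ 5 by norm_num), Real.sqrt_nonneg 5]
  unfold tc; nlinarith
lemma ht0 : (0:ℝ) < tc := by linarith [htlb]
lemma ht1 : tc < 1 := by linarith [htub]
lemma ht3 : tc^3 = 2*tc - 1 := by linear_combination (tc - 1) * ht2
lemma ht4 : tc^4 = 2 - 3*tc := by linear_combination (tc^2 - tc + 2) * ht2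

noncomputable def dd (w : Word) : ℝ := (w.count Letter.b : ℝ) - (1 - tc) * w.length
lemma dd_append (u v : Word) : dd (u ++ v) = dd u + dd v := by
  simp [dd, List.count_append, List.length_append]; push_cast; ring
lemma dd_nil : dd [] = 0 := by simp [dd]
lemma dd_a : dd [Letter.a] = tc - 1 := by
  have h : ([Letter.a].count Letter.b) = 0 := by decide
  simp [dd, h]; try ring
lemma dd_b : dd [Letter.b] = tc := by
  have h : ([Letter.b].count Letter.b) = 1 := by decide
  simp [dd, h]; try ring

lemma e2 (m : ℕ) : tc^(2*m+2) = tc^(2*m) - tc^(2*m+1) := by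
  linear_combination (tc^(2*m)) * ht2
lemma e3 (m : ℕ) : tc^(2*m+3) = 2*tc^(2*m+1) - tc^(2*m) := by
  linear_combination (tc^(2*m)*(tc - 1)) * ht2
lemma e4 (m : ℕ) : tc^(2*m+4) = 2*tc^(2*m) - 3*tc^(2*m+1) := by
  linear_combination (tc^(2*m)*(tc^2 - tc + 2)) * ht2
lemma e5 (m : ℕ) : tc^(2*m+5) = 5*tc^(2*m+1) - 3*tc^(2*m) := by
  linear_combination (tc^(2*m)*(tc^3 - tc^2 + 2*tc - 3)) * ht2

lemma single_split (c : Letter) (p s : Word) (h : [c] = p ++ s) :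
    (p = [] ∧ s = [c]) ∨ (p = [c] ∧ s = []) := by
  cases p with
  | nil => exact Or.inl ⟨rfl, h.symm⟩
  | cons c' p' =>
    simp only [List.cons_append, List.cons.injEq] at h
    obtain ⟨rfl, h2⟩ := h
    rcases List.append_eq_nil_iff.mp h2.symm with ⟨rfl, rfl⟩
    exact Or.inr ⟨rfl, rfl⟩

def InvA (m : ℕ) : Prop := ∀ w ∈ Aset (m+1),
  w.length = Nat.fib (2*m+2) ∧ dd w = -tc^(2*m+2) ∧
  ∀ p s : Word, w = p ++ s →
    (-tc + tc^(2*m+3) ≤ dd p ∧ dd p ≤ 1 - tc^(2*m)) ∧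
    (-1 + tc^(2*m+1) ≤ dd s ∧ dd s ≤ tc - tc^(2*m+1))

def InvB (m : ℕ) : Prop := ∀ w ∈ Bset (m+1),
  w.length = Nat.fib (2*m+1) ∧ dd w = tc^(2*m+1) ∧
  ∀ p s : Word, w = p ++ s →
    (-tc + tc^(2*m+1) ≤ dd p ∧ dd p ≤ 1 - tc^(2*m+2)) ∧
    (-1 + tc^(2*m) ≤ dd s ∧ dd s ≤ tc)

theorem inv_all : ∀ m, InvA m ∧ InvB m := by
  intro m
  induction m with
  | zero =>
    constructor
    · intro w hw
      have hw' : w = [Letter.a] := hw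
      subst hw'
      refine ⟨by decide, by rw [dd_a]; linear_combination ht2, ?_⟩
      intro p s h
      rcases single_split _ _ _ h with ⟨rfl, rfl⟩ | ⟨rfl, rfl⟩ <;>
        simp only [dd_nil, dd_a] <;>
        refine ⟨⟨?_, ?_⟩, ?_, ?_⟩ <;>
          nlinarith [ht2, ht3, htlb, htub, show tc^(2*0) = 1 from by norm_num,
            show tc^(2*0+1) = tc from by norm_num, show tc^(2*0+2) = tc^2 from by norm_num,
            show tc^(2*0+3) = tc^3 from by norm_num]
    · intro w hw
      have hw' : w = [Letter.b] := hw
      subst hw'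
      refine ⟨by decide, by rw [dd_b]; norm_num, ?_⟩
      intro p s h
      rcases single_split _ _ _ h with ⟨rfl, rfl⟩ | ⟨rfl, rfl⟩ <;>
        simp only [dd_nil, dd_b] <;>
        refine ⟨⟨?_, ?_⟩, ?_, ?_⟩ <;>
          nlinarith [ht2, ht3, htlb, htub, show tc^(2*0) = 1 from by norm_num,
            show tc^(2*0+1) = tc from by norm_num, show tc^(2*0+2) = tc^2 from by norm_num,
            show tc^(2*0+3) = tc^3 from by norm_num]
  | succ m ih =>
    obtain ⟨ihA, ihB⟩ := ih
    have hX0 : (0:ℝ) < tc^(2*m) := pow_pos ht0 _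
    have hYeq : tc^(2*m+1) = tc^(2*m) * tc := by ring
    have hY0 : (0:ℝ) ≤ tc^(2*m+1) := le_of_lt (pow_pos ht0 _)
    have hYX : tc^(2*m+1) ≤ tc^(2*m) := by nlinarith [htub, hX0]
    have h43 : 4*tc^(2*m+1) ≤ 3*tc^(2*m) := by nlinarith [htub, hX0]
    have h12 : tc^(2*m) ≤ 2*tc^(2*m+1) := by nlinarith [htlb, hX0]
    have g0 : tc^(2*(m+1)) = tc^(2*m) - tc^(2*m+1) := by
      rw [show 2*(m+1) = 2*m+2 from by ring]; exact e2 m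
    have g1 : tc^(2*(m+1)+1) = 2*tc^(2*m+1) - tc^(2*m) := by
      rw [show 2*(m+1)+1 = 2*m+3 from by ring]; exact e3 m
    have g2 : tc^(2*(m+1)+2) = 2*tc^(2*m) - 3*tc^(2*m+1) := by
      rw [show 2*(m+1)+2 = 2*m+4 from by ring]; exact e4 m
    have g3 : tc^(2*(m+1)+3) = 5*tc^(2*m+1) - 3*tc^(2*m) := by
      rw [show 2*(m+1)+3 = 2*m+5 from by ring]; exact e5 m
    have he2 := e2 m
    have he3 := e3 m
    constructor
    · -- A step : w = wb ++ (w1 ++ w2)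
      intro w hw
      obtain ⟨wb, hwb, v, ⟨w1, hw1, w2, hw2, rfl⟩, rfl⟩ := hw
      obtain ⟨lb, db, hb⟩ := ihB wb hwb
      obtain ⟨l1, d1, h1⟩ := ihA w1 hw1
      obtain ⟨l2, d2, h2⟩ := ihA w2 hw2
      refine ⟨?_, ?_, ?_⟩
      · have f1 : Nat.fib (2*m+1+2) = Nat.fib (2*m+1) + Nat.fib (2*m+2) := Nat.fib_add_two
        have f2 : Nat.fib (2*m+2+2) = Nat.fib (2*m+2) + Nat.fib (2*m+1+2) := by
          rw [show 2*m+1+2 = 2*m+2+1 from by ring]; exact Nat.fib_add_two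
        simp only [List.length_append, lb, l1, l2]
        have : 2*(m+1)+2 = 2*m+2+2 := by ring
        rw [this]; omega
      · rw [dd_append, dd_append, db, d1, d2, g2, e2 m]; ring
      · intro p s hps
        rcases List.append_eq_append_iff.mp hps.symm with ⟨a', ha1, ha2⟩ | ⟨c', hc1, hc2⟩
        · -- p is a prefix of wb, s = a' ++ (w1 ++ w2)
          obtain ⟨hpb, hsb⟩ := hb p a' ha1
          have hds : dd s = dd a' + dd w1 + dd w2 := by
            rw [ha2, ← List.append_assoc, dd_append, dd_append]
          refine ⟨⟨?_, ?_⟩, ?_, ?_⟩ <;> (try simp only [hds, g0, g1, g2, g3]) <;>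
            linarith [hpb.1, hpb.2, hsb.1, hsb.2, d1, d2, he2, he3, hYX, h43, h12, hY0, hX0]
        · -- p = wb ++ c', c' ++ s = w1 ++ w2
          rcases List.append_eq_append_iff.mp hc2.symm with ⟨r, hr1, hr2⟩ | ⟨q, hq1, hq2⟩
          · -- c' prefix of w1, s = r ++ w2
            obtain ⟨hc, hr⟩ := h1 c' r hr1
            have hdp : dd p = dd wb + dd c' := by rw [hc1, dd_append]
            have hds : dd s = dd r + dd w2 := by rw [hr2, dd_append]
            refine ⟨⟨?_, ?_⟩, ?_, ?_⟩ <;> (try simp only [hdp, hds, g0, g1, g2, g3]) <;>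
              linarith [hc.1, hc.2, hr.1, hr.2, db, d2, he2, he3, hYX, h43, h12, hY0, hX0]
          · -- c' = w1 ++ q, q prefix of w2, s suffix of w2
            obtain ⟨hq, hs⟩ := h2 q s hq2
            have hdp : dd p = dd wb + dd w1 + dd q := by
              rw [hc1, hq1, ← List.append_assoc, dd_append, dd_append]
            refine ⟨⟨?_, ?_⟩, ?_, ?_⟩ <;> (try simp only [hdp, g0, g1, g2, g3]) <;>
              linarith [hq.1, hq.2, hs.1, hs.2, db, d1, he2, he3, hYX, h43, h12, hY0, hX0]
    · -- B step
      intro w hw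
      rcases hw with ⟨wa, hwa, wb, hwb, rfl⟩ | ⟨wb, hwb, wa, hwa, rfl⟩
      · -- w = wa ++ wb
        obtain ⟨la, da, ha⟩ := ihA wa hwa
        obtain ⟨lb, db, hb⟩ := ihB wb hwb
        refine ⟨?_, ?_, ?_⟩
        · have f1 : Nat.fib (2*m+1+2) = Nat.fib (2*m+1) + Nat.fib (2*m+2) := Nat.fib_add_two
          simp only [List.length_append, la, lb]
          have : 2*(m+1)+1 = 2*m+1+2 := by ring
          rw [this]; omega
        · rw [dd_append, da, db, g1, e2 m]; ring
        · intro p s hps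
          rcases List.append_eq_append_iff.mp hps.symm with ⟨a', ha1, ha2⟩ | ⟨c', hc1, hc2⟩
          · -- p prefix of wa, s = a' ++ wb
            obtain ⟨hp, hs⟩ := ha p a' ha1
            have hds : dd s = dd a' + dd wb := by rw [ha2, dd_append]
            refine ⟨⟨?_, ?_⟩, ?_, ?_⟩ <;> (try simp only [hds, g0, g1, g2, g3]) <;>
              linarith [hp.1, hp.2, hs.1, hs.2, db, he2, he3, hYX, h43, h12, hY0, hX0]
          · -- p = wa ++ c', s suffix of wb
            obtain ⟨hp, hs⟩ := hb c' s hc2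
            have hdp : dd p = dd wa + dd c' := by rw [hc1, dd_append]
            refine ⟨⟨?_, ?_⟩, ?_, ?_⟩ <;> (try simp only [hdp, g0, g1, g2, g3]) <;>
              linarith [hp.1, hp.2, hs.1, hs.2, da, he2, he3, hYX, h43, h12, hY0, hX0]
      · -- w = wb ++ wa
        obtain ⟨lb, db, hb⟩ := ihB wb hwb
        obtain ⟨la, da, ha⟩ := ihA wa hwa
        refine ⟨?_, ?_, ?_⟩
        · have f1 : Nat.fib (2*m+1+2) = Nat.fib (2*m+1) + Nat.fib (2*m+2) := Nat.fib_add_two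
          simp only [List.length_append, la, lb]
          have : 2*(m+1)+1 = 2*m+1+2 := by ring
          rw [this]; omega
        · rw [dd_append, da, db, g1, e2 m]; ring
        · intro p s hps
          rcases List.append_eq_append_iff.mp hps.symm with ⟨a', ha1, ha2⟩ | ⟨c', hc1, hc2⟩
          · -- p prefix of wb, s = a' ++ wa
            obtain ⟨hp, hs⟩ := hb p a' ha1
            have hds : dd s = dd a' + dd wa := by rw [ha2, dd_append]
            refine ⟨⟨?_, ?_⟩, ?_, ?_⟩ <;> (try simp only [hds, g0, g1, g2, g3]) <;>
              linarith [hp.1, hp.2, hs.1, hs.2, da, he2, he3, hYX, h43, h12, hY0, hX0]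
          · -- p = wb ++ c', s suffix of wa
            obtain ⟨hp, hs⟩ := ha c' s hc2
            have hdp : dd p = dd wb + dd c' := by rw [hc1, dd_append]
            refine ⟨⟨?_, ?_⟩, ?_, ?_⟩ <;> (try simp only [hdp, g0, g1, g2, g3]) <;>
              linarith [hp.1, hp.2, hs.1, hs.2, db, he2, he3, hYX, h43, h12, hY0, hX0]

lemma tpow_fib : ∀ k : ℕ, tc^(2*k+1) = (Nat.fib (2*k+1)) * tc - Nat.fib (2*k) ∧
    tc^(2*k+2) = (Nat.fib (2*k+1)) - (Nat.fib (2*k+2)) * tc := by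
  intro k
  induction k with
  | zero => norm_num [ht2]
  | succ k ih =>
    obtain ⟨h1, h2⟩ := ih
    have n3 : Nat.fib (2*(k+1)+1) = Nat.fib (2*k+1) + Nat.fib (2*k+2) := by
      rw [show 2*(k+1)+1 = (2*k+1)+2 from by ring, Nat.fib_add_two (n := 2*k+1),
        show 2*k+1+1 = 2*k+2 from by ring]
    have n4 : Nat.fib (2*(k+1)+2) = Nat.fib (2*k+2) + (Nat.fib (2*k+1) + Nat.fib (2*k+2)) := by
      rw [show 2*(k+1)+2 = (2*k+2)+2 from by ring, Nat.fib_add_two (n := 2*k+2),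
        show 2*k+2+1 = (2*k+1)+2 from by ring, Nat.fib_add_two (n := 2*k+1),
        show 2*k+1+1 = 2*k+2 from by ring]
    have f3 : (Nat.fib (2*(k+1)+1) : ℝ) = Nat.fib (2*k+1) + Nat.fib (2*k+2) := by
      rw [n3]; push_cast; ring
    have f4 : (Nat.fib (2*(k+1)+2) : ℝ) =
        Nat.fib (2*k+2) + (Nat.fib (2*k+1) + Nat.fib (2*k+2)) := by
      rw [n4]; push_cast; ring
    have f5 : (Nat.fib (2*(k+1)) : ℝ) = Nat.fib (2*k+2) := by
      rw [show 2*(k+1) = 2*k+2 from by ring]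
    constructor
    · rw [f3, f5]
      linear_combination tc*h2 - (Nat.fib (2*k+2) : ℝ)*ht2
    · rw [f3, f4]
      linear_combination tc^2*h2 +
        ((Nat.fib (2*k+1) : ℝ) - (Nat.fib (2*k+2) : ℝ)*(tc-1))*ht2

theorem count_b_in_factor (n : ℕ) (hn : 2 ≤ n) (x : Word)
    (hx : x ∈ FactorSet (Aset (n + 2)) (Nat.fib (2 * n))) :
    Nat.fib (2 * n - 2) - 1 ≤ x.count Letter.b ∧
      x.count Letter.b ≤ Nat.fib (2 * n - 2) + 1 := by
  obtain ⟨hlen, w, hw, u, v, hwf⟩ := hx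
  obtain ⟨k, rfl⟩ : ∃ k, n = k + 1 := ⟨n - 1, by omega⟩
  -- invariant at level m = n (so A_(n+2) = Aset ((n+1)+1) with m = n = k+1)
  have hA := (inv_all (k+1+1)).1
  have hAw := hA w (by rwa [show k+1+2 = k+1+1+1 from by ring] at hw)
  obtain ⟨hwlen, hdw, hps⟩ := hAw
  set n := k + 1 with hk
  -- u is a prefix, v is a suffix
  have hu := (hps u (x ++ v) (by rw [hwf]; simp [List.append_assoc])).1
  have hv := (hps (u ++ x) v (by rw [hwf])).2
  have hdx : dd x = dd w - dd u - dd v := by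
    rw [hwf, dd_append, dd_append]; ring
  -- exponent bookkeeping: X = tc^(2n), Y = tc^(2n+1); level m = n+1
  have hX0 : (0:ℝ) < tc^(2*n) := pow_pos ht0 _
  have hYeq : tc^(2*n+1) = tc^(2*n) * tc := by ring
  have hY0 : (0:ℝ) ≤ tc^(2*n+1) := le_of_lt (pow_pos ht0 _)
  have h12 : tc^(2*n) ≤ 2*tc^(2*n+1) := by nlinarith [htlb, hX0]
  have hY61 : (244:ℝ)/100 * tc^(2*n) ≤ 4 * tc^(2*n+1) := by nlinarith [htlb, hX0]
  have g0 : tc^(2*(n+1)) = tc^(2*n) - tc^(2*n+1) := by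
    rw [show 2*(n+1) = 2*n+2 from by ring]; exact e2 n
  have g1 : tc^(2*(n+1)+1) = 2*tc^(2*n+1) - tc^(2*n) := by
    rw [show 2*(n+1)+1 = 2*n+3 from by ring]; exact e3 n
  have g2 : tc^(2*(n+1)+2) = 2*tc^(2*n) - 3*tc^(2*n+1) := by
    rw [show 2*(n+1)+2 = 2*n+4 from by ring]; exact e4 n
  have g3 : tc^(2*(n+1)+3) = 5*tc^(2*n+1) - 3*tc^(2*n) := by
    rw [show 2*(n+1)+3 = 2*n+5 from by ring]; exact e5 n
  -- X ≤ tc^4 = 2 - 3 tc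
  have hX4 : tc^(2*n) ≤ 2 - 3*tc := by
    rw [← ht4]
    exact pow_le_pow_of_le_one (le_of_lt ht0) (le_of_lt ht1) (by omega)
  -- the count identity
  have hcount : (x.count Letter.b : ℝ) = dd x + (1 - tc) * Nat.fib (2*n) := by
    have : (x.length : ℝ) = Nat.fib (2*n) := by rw [hlen]
    unfold dd; rw [this]; ring
  have hfib : (1 - tc) * (Nat.fib (2*n) : ℝ) = Nat.fib (2*k) + tc^(2*n) := by
    have h := (tpow_fib k).2
    have f2 : (Nat.fib (2*k+2) : ℝ) = Nat.fib (2*k) + Nat.fib (2*k+1) := by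
      rw [Nat.fib_add_two]; push_cast; ring
    rw [show 2*n = 2*k+2 from by omega, h, f2]; ring
  have h2n2 : 2*n - 2 = 2*k := by omega
  rw [h2n2]
  -- real bounds
  have hup : (x.count Letter.b : ℝ) < Nat.fib (2*k) + 2 := by
    rw [hcount, hfib, hdx, hdw, g2]
    linarith [hu.1, hu.2, hv.1, hv.2, g3, g1, g0, hX4, hY61, hX0, hY0, htlb, htub]
  have hlo : (Nat.fib (2*k) : ℝ) < x.count Letter.b + 2 := by
    rw [hcount, hfib, hdx, hdw, g2]
    linarith [hu.1, hu.2, hv.1, hv.2, g3, g1, g0, hX4, h12, hX0, hY0, htlb, htub]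
  have hup' : x.count Letter.b < Nat.fib (2*k) + 2 := by exact_mod_cast hup
  have hlo' : Nat.fib (2*k) < x.count Letter.b + 2 := by exact_mod_cast hlo
  omega
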